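/- For every n ≥ 1 and every k with 0 ≤ k ≤ n-1, the number of permutations of [n] with exactly k successions equals the number of permutations of [n] with exactly k fixed points among positions 1,...,n-1. -/

import Mathlib

open Finset

/-- Successions: positions `i` (0-based) such that `τ(i)+1 = τ(i+1)`. -/
def Suc {n : ℕ} (τ : Equiv.Perm (Fin n)) : Finset (Fin n) :=
  univ.filter (fun i => ∃ j : Fin n, (j : ℕ) = (i : ℕ) + 1 ∧ (τ i : ℕ) + 1 = (τ j : ℕ))

/-- Non-adjacent successions: positions `i` such that `τ(i)+1` occurs at some
position `j ≥ i+2`. -/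
def najSuc {n : ℕ} (τ : Equiv.Perm (Fin n)) : Finset (Fin n) :=
  univ.filter (fun i => ∃ j : Fin n, (i : ℕ) + 2 ≤ (j : ℕ) ∧ (τ j : ℕ) = (τ i : ℕ) + 1)

/-- Predecessors: positions `i` such that `τ(i)+1` occurs at some earlier position. -/
def PredSet {n : ℕ} (τ : Equiv.Perm (Fin n)) : Finset (Fin n) :=
  univ.filter (fun i => ∃ j : Fin n, j < i ∧ (τ j : ℕ) = (τ i : ℕ) + 1)

/-- Fixed points distinct from the last position. -/
def Fixbar {n : ℕ} (σ : Equiv.Perm (Fin n)) : Finset (Fin n) :=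
  univ.filter (fun i => (i : ℕ) + 1 < n ∧ σ i = i)

/-- Drop values `σ(i) < i` over positions other than the last. -/
def Dropbar {n : ℕ} (σ : Equiv.Perm (Fin n)) : Finset (Fin n) :=
  univ.filter (fun v => ∃ i : Fin n, (i : ℕ) + 1 < n ∧ σ i = v ∧ (σ i : ℕ) < (i : ℕ))

/-- Excedance values `σ(i) > i` over positions other than the last. -/
def Excbar {n : ℕ} (σ : Equiv.Perm (Fin n)) : Finset (Fin n) :=
  univ.filter (fun v => ∃ i : Fin n, (i : ℕ) + 1 < n ∧ σ i = v ∧ (i : ℕ) < (σ i : ℕ))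

/-!
For a set `I` of positions below the last one, the permutations with a succession at every
position of `I` and those fixing every point of `I` are equinumerous: both number `(n - |I|)!`.
For fixed points this is the count of permutations of the complement of `I`. For successions,
a succession at the largest position `i ∈ I` is contracted by deleting position `i + 1` together
with its value, which lowers both `n` and `|I|` by one. Equal superset counts give, by Möbius
inversion on the Boolean lattice, equal numbers of permutations whose succession set, resp. set
of fixed points, is exactly `J`; summing over `|J| = k` gives the theorem.
-/

open Equiv

section FiberCounting

variable {α γ β : Type*} [Fintype α] [Fintype γ] [Fintype β] [DecidableEq β]

theorem card_filter_eq_sum_card_fiber (S : α → Finset β) (P : Finset β → Prop) [DecidablePred P] :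
    #{x | P (S x)} = ∑ K with P K, #{x | S x = K} := by
  rw [card_eq_sum_card_fiberwise (f := S) (t := {K | P K}) (fun x hx => by simpa using hx)]
  refine sum_congr rfl fun K hK => ?_
  rw [filter_filter]
  exact congrArg card (filter_congr fun x _ => ⟨And.right, fun h => ⟨h ▸ (mem_filter.mp hK).2, h⟩⟩)

theorem card_filter_superset_eq_add_sum (S : α → Finset β) (J : Finset β) :
    #{x | J ⊆ S x} = #{x | S x = J} + ∑ K with J ⊂ K, #{x | S x = K} := by
  have hJ : J ∈ ({K | J ⊆ K} : Finset (Finset β)) := by simp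
  rw [card_filter_eq_sum_card_fiber S (J ⊆ ·), ← add_sum_erase _ _ hJ]
  congr 2
  ext K
  simp [ssubset_iff_subset_ne, and_comm, eq_comm]

/-- Möbius inversion on the Boolean lattice `Finset β`, in counting form. -/
theorem card_filter_eq_eq_of_card_filter_superset_eq (S : α → Finset β) (F : γ → Finset β)
    (h : ∀ I, #{x | I ⊆ S x} = #{y | I ⊆ F y}) (J : Finset β) :
    #{x | S x = J} = #{y | F y = J} := by
  refine strongDownwardInductionOn (n := Fintype.card β) J (fun J ih _ => ?_) (card_le_univ J)
  have hsum : ∑ K with J ⊂ K, #{x | S x = K} = ∑ K with J ⊂ K, #{y | F y = K} :=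
    sum_congr rfl fun K hK => ih (card_le_univ K) (mem_filter.mp hK).2
  have hJ := h J
  rw [card_filter_superset_eq_add_sum S, card_filter_superset_eq_add_sum F, hsum] at hJ
  exact Nat.add_right_cancel hJ

end FiberCounting

theorem Equiv.Perm.card_filter_forall_mem_apply_eq_self {α : Type*} [Fintype α] [DecidableEq α]
    (I : Finset α) :
    #{σ : Perm α | ∀ a ∈ I, σ a = a} = (Fintype.card α - #I).factorial := by
  have e : Perm {a // a ∉ I} ≃ {σ : Perm α // ∀ a ∈ I, σ a = a} :=
    (Perm.subtypeEquivSubtypePerm _).trans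
      (Equiv.subtypeEquivRight fun σ => by simp only [not_not])
  rw [← Fintype.card_subtype, ← Fintype.card_congr e, Fintype.card_perm,
    Fintype.card_subtype_compl, Fintype.card_coe]

theorem card_filter_superset_Fixbar {n : ℕ} (I : Finset (Fin n))
    (hI : ∀ i ∈ I, (i : ℕ) + 1 < n) :
    #{σ : Perm (Fin n) | I ⊆ Fixbar σ} = (n - #I).factorial := by
  calc #{σ : Perm (Fin n) | I ⊆ Fixbar σ}
      = #{σ : Perm (Fin n) | ∀ a ∈ I, σ a = a} :=
        congrArg card <| filter_congr fun σ _ => ⟨fun h a ha => (mem_filter.mp (h ha)).2.2,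
          fun h a ha => mem_filter.mpr ⟨mem_univ a, hI a ha, h a ha⟩⟩
    _ = (n - #I).factorial := by
        convert Perm.card_filter_forall_mem_apply_eq_self I
        exact (Fintype.card_fin n).symm

theorem Fin.val_succAbove {m : ℕ} (q : Fin (m + 1)) (x : Fin m) :
    (q.succAbove x : ℕ) = if (x : ℕ) < q then (x : ℕ) else (x : ℕ) + 1 := by
  unfold Fin.succAbove
  split_ifs <;> simp_all [Fin.lt_def]

theorem Fin.val_succAbove_add_one_eq_iff {m : ℕ} {q : Fin (m + 1)} {x y : Fin m}
    (h : (x : ℕ) + 1 ≠ q) : (q.succAbove x : ℕ) + 1 = q.succAbove y ↔ (x : ℕ) + 1 = y := by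
  rw [Fin.val_succAbove, Fin.val_succAbove]
  split_ifs <;> omega

section Successions

variable {m : ℕ}

theorem mem_Suc_iff {n : ℕ} {τ : Perm (Fin n)} {i : Fin n} :
    i ∈ Suc τ ↔ ∃ h : (i : ℕ) + 1 < n, (τ i : ℕ) + 1 = τ ⟨i + 1, h⟩ := by
  simp only [Suc, mem_filter, mem_univ, true_and]
  constructor
  · rintro ⟨j, hj, hτ⟩
    have hlt : (i : ℕ) + 1 < n := hj ▸ j.isLt
    exact ⟨hlt, by rwa [show (⟨i + 1, hlt⟩ : Fin n) = j from Fin.ext hj.symm]⟩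
  · rintro ⟨h, hτ⟩
    exact ⟨_, rfl, hτ⟩

theorem val_add_one_lt_of_mem_Suc {n : ℕ} {τ : Perm (Fin n)} {i : Fin n} (h : i ∈ Suc τ) :
    (i : ℕ) + 1 < n :=
  (mem_Suc_iff.mp h).1

theorem castSucc_mem_Suc_iff {τ : Perm (Fin (m + 1))} {a : Fin m} :
    a.castSucc ∈ Suc τ ↔ (τ a.castSucc : ℕ) + 1 = τ a.succ := by
  simp [mem_Suc_iff, Fin.succ]

/-- Insert, right after position `p` of `τ`, the value `τ p + 1`; the values `≥ τ p + 1` are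
shifted up by one. -/
def insertSuccession (p : Fin m) (τ : Perm (Fin m)) : Perm (Fin (m + 1)) :=
  (finSuccEquiv' p.succ).trans (τ.optionCongr.trans (finSuccEquiv' (τ p).succ).symm)

variable (p : Fin m) (τ : Perm (Fin m))

@[simp]
theorem insertSuccession_apply_succ : insertSuccession p τ p.succ = (τ p).succ := by
  simp [insertSuccession]

@[simp]
theorem insertSuccession_apply_succAbove (x : Fin m) :
    insertSuccession p τ (p.succ.succAbove x) = (τ p).succ.succAbove (τ x) := by
  simp [insertSuccession]

@[simp]
theorem insertSuccession_apply_castSucc : insertSuccession p τ p.castSucc = (τ p).castSucc := by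
  simpa using insertSuccession_apply_succAbove p τ p

theorem castSucc_mem_Suc_insertSuccession : p.castSucc ∈ Suc (insertSuccession p τ) := by
  simp [castSucc_mem_Suc_iff]

theorem castSucc_mem_Suc_insertSuccession_iff {a : Fin m} (hap : a < p) :
    a.castSucc ∈ Suc (insertSuccession p τ) ↔ a ∈ Suc τ := by
  have hsucc : (a : ℕ) + 1 < m := by omega
  have hpos : ∀ b : Fin m, b ≤ p → p.succ.succAbove b = b.castSucc := fun b hb =>
    Fin.succAbove_of_castSucc_lt _ _ (by simpa [Fin.lt_def] using Nat.lt_succ_of_le hb)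
  have ha : a.succ = p.succ.succAbove ⟨a + 1, hsucc⟩ := by
    rw [hpos _ (by simpa [Fin.le_def] using hap)]; rfl
  rw [castSucc_mem_Suc_iff, ← hpos a hap.le, ha, insertSuccession_apply_succAbove,
    insertSuccession_apply_succAbove, Fin.val_succAbove_add_one_eq_iff, mem_Suc_iff]
  · exact ⟨fun h => ⟨hsucc, h⟩, fun ⟨_, h⟩ => h⟩
  · intro h
    exact hap.ne (τ.injective (Fin.ext (by simpa using h)))

theorem insertSuccession_injective : Function.Injective (insertSuccession p) := by
  intro τ₁ τ₂ h
  have hp : τ₁ p = τ₂ p := by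
    simpa using congrArg (· p.castSucc) h
  ext1 x
  have hx := congrArg (· (p.succ.succAbove x)) h
  simpa [hp] using hx

theorem exists_insertSuccession_eq {σ : Perm (Fin (m + 1))} (h : p.castSucc ∈ Suc σ) :
    ∃ τ, insertSuccession p τ = σ := by
  -- `τ` is `σ` with position `p + 1` and the value `σ (p + 1)` deleted
  have hne : ∀ x, σ (p.succ.succAbove x) ≠ σ p.succ := fun x hx =>
    Fin.succAbove_ne _ _ (σ.injective hx)
  choose f hf using fun x => Fin.exists_succAbove_eq (hne x)
  have hf_inj : Function.Injective f := fun x y hxy =>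
    Fin.succAbove_right_injective (σ.injective (by rw [← hf, ← hf, hxy]))
  set τ := Equiv.ofBijective f (Finite.injective_iff_bijective.mp hf_inj)
  have hq : (τ p).succ = σ p.succ := by
    rw [castSucc_mem_Suc_iff, ← Fin.succAbove_succ_self, ← hf, Fin.val_succAbove] at h
    ext
    split_ifs at h
    · simpa [τ] using h
    · omega
  refine ⟨τ, Equiv.ext fun y => ?_⟩
  induction y using Fin.succAboveCases p.succ with
  | x => rw [insertSuccession_apply_succ, hq]
  | p x => rw [insertSuccession_apply_succAbove, hq, ← hf]; rfl

end Successions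

theorem insert_subset_Suc_insertSuccession_iff {m : ℕ} {p : Fin m} {I : Finset (Fin m)}
    (hI : ∀ a ∈ I, a < p) (τ : Perm (Fin m)) :
    insert p.castSucc (I.map Fin.castSuccEmb) ⊆ Suc (insertSuccession p τ) ↔ I ⊆ Suc τ := by
  rw [insert_subset_iff, and_iff_right (castSucc_mem_Suc_insertSuccession p τ),
    map_subset_iff_subset_preimage]
  exact forall₂_congr fun a ha =>
    mem_preimage.trans (castSucc_mem_Suc_insertSuccession_iff p τ (hI a ha))

theorem card_filter_insert_subset_Suc {m : ℕ} (p : Fin m) (I : Finset (Fin m))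
    (hI : ∀ a ∈ I, a < p) :
    #{τ : Perm (Fin (m + 1)) | insert p.castSucc (I.map Fin.castSuccEmb) ⊆ Suc τ} =
      #{τ : Perm (Fin m) | I ⊆ Suc τ} := by
  have himage :
      ({τ | insert p.castSucc (I.map Fin.castSuccEmb) ⊆ Suc τ} : Finset (Perm (Fin (m + 1)))) =
        ({τ | I ⊆ Suc τ} : Finset (Perm (Fin m))).image (insertSuccession p) := by
    ext τ
    simp only [mem_filter, mem_univ, true_and, mem_image]
    constructor
    · intro h
      obtain ⟨τ', rfl⟩ := exists_insertSuccession_eq p (h (mem_insert_self _ _))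
      exact ⟨τ', (insert_subset_Suc_insertSuccession_iff hI τ').mp h, rfl⟩
    · rintro ⟨τ', h, rfl⟩
      exact (insert_subset_Suc_insertSuccession_iff hI τ').mpr h
  rw [himage, card_image_of_injective _ (insertSuccession_injective p)]

theorem card_filter_superset_Suc {n : ℕ} (I : Finset (Fin n)) (hI : ∀ i ∈ I, (i : ℕ) + 1 < n) :
    #{τ : Perm (Fin n) | I ⊆ Suc τ} = (n - #I).factorial := by
  induction n with
  | zero => rw [Subsingleton.elim I ∅]; simp
  | succ m ih =>
    rcases I.eq_empty_or_nonempty with rfl | hne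
    · simp [Fintype.card_perm]
    have hi : (I.max' hne : ℕ) < m := by have := hI _ (max'_mem I hne); omega
    set p : Fin m := ⟨I.max' hne, hi⟩
    have hpI : p.castSucc = I.max' hne := rfl
    obtain ⟨J, -, hJ⟩ := subset_map_iff.mp fun a (ha : a ∈ I.erase (I.max' hne)) =>
      show a ∈ univ.map Fin.castSuccEmb by
        have : a < I.max' hne := lt_max'_of_mem_erase_max' I hne ha
        simpa [Fin.ext_iff] using ⟨⟨a, by omega⟩, rfl⟩
    have hJp : ∀ a ∈ J, a < p := fun a ha => by
      have := lt_max'_of_mem_erase_max' I hne (hJ ▸ mem_map_of_mem _ ha : a.castSucc ∈ I.erase _)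
      simpa [← hpI] using this
    have hIJ : I = insert p.castSucc (J.map Fin.castSuccEmb) := by
      rw [← hJ, hpI, insert_erase (max'_mem I hne)]
    have hcard : #I = #J + 1 := by
      rw [← card_erase_add_one (max'_mem I hne), hJ, card_map]
    rw [hcard, Nat.add_sub_add_right, hIJ, card_filter_insert_subset_Suc p J hJp]
    exact ih J fun a ha => by have := hJp a ha; omega

theorem card_filter_superset_Suc_eq_card_filter_superset_Fixbar {n : ℕ} (I : Finset (Fin n)) :
    #{τ : Perm (Fin n) | I ⊆ Suc τ} = #{σ : Perm (Fin n) | I ⊆ Fixbar σ} := by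
  by_cases hI : ∀ i ∈ I, (i : ℕ) + 1 < n
  · rw [card_filter_superset_Suc I hI, card_filter_superset_Fixbar I hI]
  · obtain ⟨i, hi, hin⟩ := not_forall₂.mp hI
    rw [filter_eq_empty_iff.mpr fun τ _ h => hin (val_add_one_lt_of_mem_Suc (h hi)),
      filter_eq_empty_iff.mpr fun σ _ h => hin (mem_filter.mp (h hi)).2.1]

theorem card_filter_Suc_eq_card_filter_Fixbar_eq {n : ℕ} (J : Finset (Fin n)) :
    #{τ : Perm (Fin n) | Suc τ = J} = #{σ : Perm (Fin n) | Fixbar σ = J} :=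
  card_filter_eq_eq_of_card_filter_superset_eq Suc Fixbar
    card_filter_superset_Suc_eq_card_filter_superset_Fixbar J

theorem stmt_8_general (n : ℕ) (k : ℕ) :
    ((Finset.univ : Finset (Equiv.Perm (Fin n))).filter (fun σ => (Suc σ).card = k)).card =
    ((Finset.univ : Finset (Equiv.Perm (Fin n))).filter (fun σ => (Fixbar σ).card = k)).card := by
  rw [card_filter_eq_sum_card_fiber Suc (#· = k), card_filter_eq_sum_card_fiber Fixbar (#· = k)]
  exact sum_congr rfl fun J _ => card_filter_Suc_eq_card_filter_Fixbar_eq J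

/-- The number of permutations of [n] with exactly k successions equals the
number of permutations of [n] with exactly k fixed points among the first
n-1 positions. -/
theorem stmt_8 (n : ℕ) (hn : 1 ≤ n) (k : ℕ) (hk : k ≤ n - 1) :
    ((Finset.univ : Finset (Equiv.Perm (Fin n))).filter (fun σ => (Suc σ).card = k)).card =
    ((Finset.univ : Finset (Equiv.Perm (Fin n))).filter (fun σ => (Fixbar σ).card = k)).card :=
  stmt_8_general n k
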